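/- Let S(·) be a real-valued function on subsystems of a quantum system satisfying subadditivity S(XY) ≤ S(X) + S(Y) and the Araki–Lieb inequality S(XY) ≥ |S(X) - S(Y)|. Suppose systems R, H_1 (= H_{D\F}), H_2 (= H_F) satisfy: S(H_1 H_2) - S(R H_1 H_2) = S(S_ec), S(R H_1) = S(R) + S(H_1), and S(R) = S(S_ec), where S(S_ec) ≥ 0 is the secret entropy. Then S(H_2) ≥ S(S_ec). -/

import Mathlib

theorem entropy_join_sub_entropy_join_ref_le {α : Type*} (join : α → α → α) (S : α → ℝ)
    (hsub : ∀ X Y, S (join X Y) ≤ S X + S Y)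
    (hAL : ∀ X Y, |S X - S Y| ≤ S (join X Y))
    {R X Y : α} (hRX : S (join R X) = S R + S X) :
    S (join X Y) - S (join (join R X) Y) ≤ 2 * S Y - S R := by
  have hlower : S (join R X) - S Y ≤ S (join (join R X) Y) := (le_abs_self _).trans (hAL _ _)
  linarith [hsub X Y]

theorem entropy_partial_share_bound_general {α : Type*} (join : α → α → α) (S : α → ℝ)
    (hsub : ∀ X Y, S (join X Y) ≤ S X + S Y)
    (hAL : ∀ X Y, |S X - S Y| ≤ S (join X Y))
    (R H1 H2 : α) (Ssec : ℝ)
    (hrec : S (join H1 H2) - S (join (join R H1) H2) = Ssec)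
    (hsec : S (join R H1) = S R + S H1)
    (hR : S R = Ssec) :
    Ssec ≤ S H2 := by
  have hdrop := entropy_join_sub_entropy_join_ref_le join S hsub hAL (Y := H2) hsec
  linarith

/-- Abstract entropy bookkeeping in the information-theoretic lower bound:
for an entropy function `S` on systems (with a join operation) satisfying
subadditivity and the Araki–Lieb inequality, if
`S(H₁H₂) - S(RH₁H₂) = S_sec` (recoverability),
`S(RH₁) = S(R) + S(H₁)` (secrecy), and `S(R) = S_sec ≥ 0`,
then `S(H₂) ≥ S_sec`. -/
theorem entropy_partial_share_bound {α : Type*} (join : α → α → α) (S : α → ℝ)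
    (hsub : ∀ X Y, S (join X Y) ≤ S X + S Y)
    (hAL : ∀ X Y, |S X - S Y| ≤ S (join X Y))
    (R H1 H2 : α) (Ssec : ℝ) (hSsec : 0 ≤ Ssec)
    (hrec : S (join H1 H2) - S (join (join R H1) H2) = Ssec)
    (hsec : S (join R H1) = S R + S H1)
    (hR : S R = Ssec) :
    Ssec ≤ S H2 :=
  entropy_partial_share_bound_general join S hsub hAL R H1 H2 Ssec hrec hsec hR
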